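/- arXiv:2401.07273 — 3 statements merged into one kernel-verified Lean document; each statement's English description precedes it below -/
import Mathlib

section
/- Let E = H × G be a group where H is a finite subgroup and G is a subgroup isomorphic to ℤ^k for some k ≥ 0. Let N be the intersection of all complements of H in E. Then N has finite index in E and N is invariant under every automorphism of E. -/
/-- Let `E = H × G` (internal direct product) with `H` a finite subgroup
and `G` a subgroup isomorphic to `ℤ^k`.  A *complement* of `H` in `E` is a subgroup `K`
with `E = HK` and `H ∩ K` trivial (`Subgroup.IsComplement'`).  Let `N` be the intersection
of all complements of `H` in `E`.  Then `N` has finite index in `E`, and `N` is invariant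
under every automorphism of `E`. -/
theorem stmt_0 {E : Type*} [Group E] (H G : Subgroup E) [Finite H]
    [H.Normal] [G.Normal] (k : ℕ)
    (hG : Nonempty (G ≃* Multiplicative (Fin k → ℤ)))
    (hcompl : H.IsComplement' G) :
    (⨅ K ∈ {K : Subgroup E | H.IsComplement' K}, K).FiniteIndex ∧
    ∀ φ : E ≃* E,
      Subgroup.map φ.toMonoidHom (⨅ K ∈ {K : Subgroup E | H.IsComplement' K}, K) =
        ⨅ K ∈ {K : Subgroup E | H.IsComplement' K}, K := by
  classical
  obtain ⟨e⟩ := hG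
  set S : Set (Subgroup E) := {K : Subgroup E | H.IsComplement' K} with hS
  set N : Subgroup E := ⨅ K ∈ S, K with hN
  set n : ℕ := Nat.card H with hn
  have hnpos : 0 < n := Nat.card_pos
  -- elements of H and G commute
  have hcomm : ∀ x ∈ H, ∀ y ∈ G, Commute x y := fun x hx y hy =>
    Subgroup.commute_of_normal_of_disjoint H G ‹_› ‹_› hcompl.disjoint x y hx hy
  -- G is torsion-free
  have hGtf : ∀ g ∈ G, ∀ m : ℕ, 0 < m → g ^ m = 1 → g = 1 := by
    intro g hg m hm hgm
    set u : G := ⟨g, hg⟩ with hu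
    have hum : u ^ m = 1 := by
      apply Subtype.ext
      simpa using hgm
    have : (e u) ^ m = 1 := by rw [← map_pow, hum, map_one]
    have h0 : m • Multiplicative.toAdd (e u) = 0 := by
      simpa using congrArg Multiplicative.toAdd this
    have h1 : Multiplicative.toAdd (e u) = 0 := by
      funext i
      have := congrFun h0 i
      simp only [Pi.smul_apply, Pi.zero_apply, smul_eq_mul] at this
      have hmne : (m : ℤ) ≠ 0 := Int.natCast_ne_zero.mpr hm.ne'
      exact (mul_eq_zero.mp this).resolve_left hmne
    have : e u = 1 := by
      have := congrArg Multiplicative.ofAdd h1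
      simpa using this
    have : u = 1 := by
      have := congrArg e.symm this
      simpa using this
    simpa [hu, Subtype.ext_iff] using this
  -- H is exactly the set of torsion elements of E
  have hH_char : ∀ x : E, x ∈ H ↔ IsOfFinOrder x := by
    intro x
    constructor
    · intro hx
      have : (⟨x, hx⟩ : H) ^ n = 1 := pow_card_eq_one'
      have hx1 : x ^ n = 1 := by simpa [Subtype.ext_iff] using this
      exact isOfFinOrder_iff_pow_eq_one.mpr ⟨n, hnpos, hx1⟩
    · intro hx
      obtain ⟨m, hm, hxm⟩ := isOfFinOrder_iff_pow_eq_one.mp hx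
      obtain ⟨⟨⟨h, hh⟩, ⟨g, hg⟩⟩, hprod⟩ := (hcompl.existsUnique x).exists
      simp only at hprod
      have hcom : Commute h g := hcomm h hh g hg
      have hpow : x ^ m = h ^ m * g ^ m := by rw [← hprod, hcom.mul_pow]
      have hxm' : h ^ m * g ^ m = 1 := by rw [← hpow]; exact hxm
      have hgm : g ^ m = (h ^ m)⁻¹ := eq_inv_of_mul_eq_one_right hxm'
      have hgmH : g ^ m ∈ H := hgm ▸ inv_mem (pow_mem hh m)
      have hgmbot : g ^ m ∈ H ⊓ G := ⟨hgmH, pow_mem hg m⟩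
      have hgm1 : g ^ m = 1 := by
        have := hcompl.disjoint.le_bot hgmbot
        simpa using this
      have hg1 : g = 1 := hGtf g hg m hm hgm1
      rw [← hprod, hg1, mul_one]
      exact hh
  -- every automorphism fixes H
  have hHmap : ∀ φ : E ≃* E, Subgroup.map φ.toMonoidHom H = H := by
    intro φ
    ext x
    constructor
    · rintro ⟨y, hy, rfl⟩
      exact (hH_char _).mpr (φ.toMonoidHom.isOfFinOrder ((hH_char y).mp hy))
    · intro hx
      refine ⟨φ.symm x, ?_, by simp⟩
      exact (hH_char _).mpr (φ.symm.toMonoidHom.isOfFinOrder ((hH_char x).mp hx))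
  -- automorphisms permute the complements of H
  have hCmap : ∀ φ : E ≃* E, ∀ K ∈ S, Subgroup.map φ.toMonoidHom K ∈ S := by
    intro φ K hK
    rw [hS, Set.mem_setOf_eq] at hK ⊢
    rw [← hHmap φ]
    apply Subgroup.isComplement'_of_disjoint_and_mul_eq_univ
    · rw [disjoint_iff, ← Subgroup.map_inf _ _ _ φ.injective,
        disjoint_iff.mp hK.disjoint, Subgroup.map_bot]
    · rw [Subgroup.coe_map, Subgroup.coe_map, ← Set.image_mul, hK.mul_eq,
        Set.image_univ]
      exact Set.range_eq_univ.mpr φ.surjective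
  have hcancel : ∀ (ψ : E ≃* E) (K : Subgroup E),
      Subgroup.map ψ.toMonoidHom (Subgroup.map ψ.symm.toMonoidHom K) = K := by
    intro ψ K
    ext x
    simp [Subgroup.mem_map]
  -- N is mapped into itself by any automorphism
  have hkey : ∀ φ : E ≃* E, Subgroup.map φ.toMonoidHom N ≤ N := by
    intro φ
    rw [hN]
    refine le_iInf₂ fun K hK => ?_
    have h1 : Subgroup.map φ.symm.toMonoidHom K ∈ S := hCmap φ.symm K hK
    have h2 : N ≤ Subgroup.map φ.symm.toMonoidHom K := biInf_le _ h1
    calc Subgroup.map φ.toMonoidHom N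
        ≤ Subgroup.map φ.toMonoidHom (Subgroup.map φ.symm.toMonoidHom K) :=
          Subgroup.map_mono h2
      _ = K := hcancel φ K
  -- the elements g^n for g ∈ G lie in every complement
  have hpow : ∀ K ∈ S, ∀ g ∈ G, g ^ n ∈ K := by
    intro K hK g hg
    obtain ⟨⟨⟨h, hh⟩, ⟨x, hx⟩⟩, hprod⟩ := (hK.existsUnique g).exists
    simp only at hprod
    have hx_eq : x = h⁻¹ * g := by rw [← hprod]; group
    have hcom : Commute h⁻¹ g := (hcomm h hh g hg).inv_left
    have hh1 : h ^ n = 1 := by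
      have : (⟨h, hh⟩ : H) ^ n = 1 := pow_card_eq_one'
      simpa [Subtype.ext_iff] using this
    have hxn : x ^ n = g ^ n := by
      rw [hx_eq, hcom.mul_pow, inv_pow, hh1, inv_one, one_mul]
    rw [← hxn]
    exact pow_mem hx n
  -- the subgroup of n-th powers of G
  set Sz : AddSubgroup (Fin k → ℤ) :=
    AddSubgroup.pi Set.univ fun _ => AddSubgroup.zmultiples (n : ℤ) with hSz
  set Sm : Subgroup (Multiplicative (Fin k → ℤ)) := AddSubgroup.toSubgroup Sz with hSm
  set X : Subgroup G := Sm.comap e.toMonoidHom with hX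
  set T : Subgroup E := X.map G.subtype with hT
  have hT_le_G : T ≤ G := by
    rintro x ⟨⟨g, hgG⟩, _, rfl⟩
    exact hgG
  have hT_le_N : T ≤ N := by
    rw [hN]
    refine le_iInf₂ fun K hK => ?_
    rintro x ⟨⟨g, hgG⟩, hgX, rfl⟩
    set u : G := ⟨g, hgG⟩ with hu
    have h1 : e u ∈ Sm := by
      have h0 : u ∈ X := hgX
      rwa [hX, Subgroup.mem_comap] at h0
    have h2 : Multiplicative.toAdd (e u) ∈ Sz := h1
    have hgX' : ∀ i, (n : ℤ) ∣ Multiplicative.toAdd (e u) i := by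
      intro i
      rw [hSz] at h2
      exact Int.mem_zmultiples_iff.mp (h2 i (Set.mem_univ i))
    set w : Fin k → ℤ := fun i => Multiplicative.toAdd (e u) i / n with hw
    have hnw : n • w = Multiplicative.toAdd (e u) := by
      funext i
      simp only [Pi.smul_apply, hw, nsmul_eq_mul]
      exact Int.mul_ediv_cancel' (hgX' i)
    set v : G := e.symm (Multiplicative.ofAdd w) with hv
    have huv : u = v ^ n := by
      rw [hv, ← map_pow]
      have : (Multiplicative.ofAdd w) ^ n = Multiplicative.ofAdd (n • w) := by
        simp [← ofAdd_nsmul]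
      rw [this, hnw]
      simp
    have hgv : G.subtype ⟨g, hgG⟩ = (v : E) ^ n := by
      have := congrArg (Subtype.val) huv
      simpa [hu] using this
    rw [hgv]
    exact hpow K hK (v : E) v.2
  -- T has finite index
  have hG_index : G.index = n := hcompl.index_eq_card
  have hX_eq : T.subgroupOf G = X := by
    rw [hT, ← Subgroup.comap_subtype]
    exact Subgroup.comap_map_eq_self_of_injective G.subtype_injective X
  have hX_index : X.index = n ^ k := by
    rw [hX, Subgroup.index_comap_of_surjective _ e.surjective, hSm,
      AddSubgroup.index_toSubgroup, hSz, AddSubgroup.index_pi]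
    simp [Int.index_zmultiples]
  have hT_index : T.index ≠ 0 := by
    have h1 : T.relIndex G * G.index = T.index := Subgroup.relIndex_mul_index hT_le_G
    rw [← h1, Subgroup.relIndex, hX_eq, hX_index, hG_index]
    positivity
  constructor
  · haveI : T.FiniteIndex := ⟨hT_index⟩
    exact Subgroup.finiteIndex_of_le hT_le_N
  · intro φ
    refine le_antisymm (hkey φ) ?_
    have h2 : Subgroup.map φ.symm.toMonoidHom N ≤ N := hkey φ.symm
    calc N = Subgroup.map φ.toMonoidHom (Subgroup.map φ.symm.toMonoidHom N) :=
          (hcancel φ N).symm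
      _ ≤ Subgroup.map φ.toMonoidHom N := Subgroup.map_mono h2
end

section
/- Let E = H × G be a group where H is a finite subgroup and G ≅ ℤ^k. Let E' ⊆ E be a normal subgroup with E/E' ≅ ℤ^l for some 0 ≤ l ≤ k. Then H ⊆ E', and if N is the intersection of all complements of H in E and N' is the intersection of all complements of H in E', then N ∩ E' = N'. -/
open scoped Pointwise

/-- Let `E = H × G` (internal direct product) with `H` finite and
`G ≅ ℤ^k`.  Let `E' ⊆ E` be a normal subgroup with `E/E' ≅ ℤ^l`, `0 ≤ l ≤ k`.
Then `H ⊆ E'`; moreover if `N` is the intersection of all complements of `H` in `E`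
(subgroups `K` with `E = HK`, `H ∩ K = 1`) and `N'` is the intersection of all
complements of `H` in `E'` (subgroups `K ≤ E'` with `HK = E'`, `H ∩ K = 1`),
then `N ∩ E' = N'`. -/
theorem stmt_1 {E : Type*} [Group E] (H G : Subgroup E) [Finite H]
    [H.Normal] [G.Normal] (k l : ℕ) (hlk : l ≤ k)
    (hG : Nonempty (G ≃* Multiplicative (Fin k → ℤ)))
    (hcompl : H.IsComplement' G)
    (E' : Subgroup E) [E'.Normal]
    (hquot : Nonempty ((E ⧸ E') ≃* Multiplicative (Fin l → ℤ))) :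
    H ≤ E' ∧
    (⨅ K ∈ {K : Subgroup E | H.IsComplement' K}, K) ⊓ E' =
      ⨅ K ∈ {K : Subgroup E |
        K ≤ E' ∧ (H : Set E) * (K : Set E) = (E' : Set E) ∧ H ⊓ K = ⊥}, K := by
  obtain ⟨f⟩ := hG
  obtain ⟨q⟩ := hquot
  -- decomposition of any element of E
  have hdecomp : ∀ x : E, ∃ h ∈ H, ∃ g ∈ G, h * g = x := by
    intro x
    obtain ⟨⟨h, g⟩, hx⟩ := hcompl.2 x
    exact ⟨h, h.2, g, g.2, hx⟩
  have hdisHG : ∀ x : E, x ∈ H → x ∈ G → x = 1 :=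
    fun x hx hx' => Subgroup.disjoint_def.mp hcompl.disjoint hx hx'
  have hHG : ∀ h ∈ H, ∀ g ∈ G, Commute h g :=
    fun h hh g hg => Subgroup.commute_of_normal_of_disjoint H G ‹_› ‹_› hcompl.disjoint h g hh hg
  -- G is abelian
  have hGab : ∀ a b : ↥G, a * b = b * a := by
    intro a b
    apply f.injective
    rw [map_mul, map_mul, mul_comm]
  -- G is central in E
  have hcentral : ∀ g ∈ G, ∀ x : E, Commute g x := by
    intro g hg x
    obtain ⟨h, hh, g', hg', rfl⟩ := hdecomp x
    refine Commute.mul_right ((hHG h hh g hg).symm) ?_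
    exact congrArg Subtype.val (hGab ⟨g, hg⟩ ⟨g', hg'⟩)
  -- torsion-freeness of the quotient
  have tfree : ∀ (z : E ⧸ E') (n : ℕ), n ≠ 0 → z ^ n = 1 → z = 1 := by
    intro z n hn hz
    have h1 : (q z) ^ n = 1 := by rw [← map_pow, hz, map_one]
    have h2 : n • (Multiplicative.toAdd (q z)) = 0 := by
      rw [← toAdd_pow, h1]; rfl
    have h3 : q z = 1 := by
      rw [← toAdd_eq_zero]
      funext i
      have h4 := congrFun h2 i
      simp only [Pi.smul_apply, Pi.zero_apply, nsmul_eq_mul] at h4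
      rcases mul_eq_zero.mp h4 with h5 | h5
      · exact absurd (by exact_mod_cast h5) hn
      · exact h5
    exact q.injective (h3.trans (map_one q).symm)
  -- H is contained in E'
  have hHE' : H ≤ E' := by
    intro h hh
    rw [← QuotientGroup.eq_one_iff]
    apply tfree _ (Nat.card ↥H) Nat.card_pos.ne'
    have hpow : h ^ Nat.card ↥H = 1 := by
      have : ((⟨h, hh⟩ : ↥H) : E) ^ Nat.card ↥H = 1 := by
        rw [← SubgroupClass.coe_pow, pow_card_eq_one', OneMemClass.coe_one]
      exact this
    rw [← QuotientGroup.mk_pow, hpow, QuotientGroup.mk_one]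
  -- exponent facts
  set e : ℕ := Monoid.exponent ↥H with he_def
  have hepos : 0 < e := Monoid.exponent_pos_of_exists (Nat.card ↥H) Nat.card_pos
      (fun g => pow_card_eq_one')
  have he1 : ∀ h ∈ H, h ^ e = 1 := by
    intro h hh
    have : ((⟨h, hh⟩ : ↥H) : E) ^ e = 1 := by
      rw [← SubgroupClass.coe_pow, Monoid.pow_exponent_eq_one, OneMemClass.coe_one]
    exact this
  have hedvd : ∀ (m : ℤ), (∀ h ∈ H, h ^ m = 1) → (e : ℤ) ∣ m := by
    intro m hm
    have key : ∀ g : ↥H, g ^ m.natAbs = 1 := by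
      intro g
      have h1 : (g : E) ^ m = 1 := hm g g.2
      have h2 : (g : E) ^ m.natAbs = 1 := by
        rcases Int.natAbs_eq m with h | h
        · rw [h, zpow_natCast] at h1; exact h1
        · rw [h, zpow_neg, inv_eq_one, zpow_natCast] at h1; exact h1
      exact Subtype.ext (by simpa using h2)
    have := Monoid.exponent_dvd_of_forall_pow_eq_one key
    exact dvd_trans (Int.natCast_dvd_natCast.mpr this) (Int.natAbs_dvd.mpr dvd_rfl)
  -- building complements from homomorphisms into H
  have hK : ∀ (ψ : ↥G →* E), (∀ g, ψ g ∈ H) →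
      ∃ Kψ : Subgroup E, H.IsComplement' Kψ ∧
        (∀ x ∈ Kψ, ∃ g : ↥G, ψ g * (g : E) = x) := by
    intro ψ hψ
    have hmul : ∀ a b : ↥G, ψ (a * b) * ((a * b : ↥G) : E) = (ψ a * a) * (ψ b * b) := by
      intro a b
      have hca : Commute ((a : E)) (ψ b) := hcentral a a.2 (ψ b)
      rw [map_mul]
      push_cast
      calc ψ a * ψ b * ((a : E) * b) = ψ a * (ψ b * a) * b := by group
        _ = ψ a * ((a : E) * ψ b) * b := by rw [← hca.eq]
        _ = ψ a * a * (ψ b * b) := by group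
    let χ : ↥G →* E := MonoidHom.mk' (fun g => ψ g * (g : E)) (fun a b => hmul a b)
    refine ⟨χ.range, ?_, ?_⟩
    · apply Subgroup.isComplement'_of_disjoint_and_mul_eq_univ
      · rw [Subgroup.disjoint_def]
        intro x hxH hxK
        rw [MonoidHom.mem_range] at hxK
        obtain ⟨g, hg⟩ := hxK
        have hg' : ψ g * (g : E) = x := hg
        have hgH : (g : E) ∈ H := by
          have hgeq : (g : E) = (ψ g)⁻¹ * x := by rw [← hg']; group
          rw [hgeq]; exact H.mul_mem (H.inv_mem (hψ g)) hxH
        have hg1 : g = (1 : ↥G) := Subtype.ext (hdisHG _ hgH g.2)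
        rw [← hg', hg1, map_one, OneMemClass.coe_one, mul_one]
      · ext z
        simp only [Set.mem_univ, iff_true]
        obtain ⟨h, hh, g, hg, rfl⟩ := hdecomp z
        refine Set.mem_mul.mpr ⟨h * (ψ ⟨g, hg⟩)⁻¹, H.mul_mem hh (H.inv_mem (hψ _)),
          ψ ⟨g, hg⟩ * g, ⟨⟨g, hg⟩, rfl⟩, by group⟩
    · rintro x ⟨g, rfl⟩
      exact ⟨g, rfl⟩
  refine ⟨hHE', ?_⟩
  ext x
  simp only [Subgroup.mem_inf, Subgroup.mem_iInf, Set.mem_setOf_eq]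
  constructor
  · rintro ⟨hN, hxE'⟩ K ⟨hKE', hKmul, hKbot⟩
    -- x lies in G (a complement of H)
    have hxG : x ∈ G := hN G hcompl
    set v : Fin k → ℤ := Multiplicative.toAdd (f ⟨x, hxG⟩) with hv
    have hdvd : ∀ i, (e : ℤ) ∣ v i := by
      intro i
      apply hedvd
      intro h hh
      have hψmul : ∀ a b : ↥G, h ^ (Multiplicative.toAdd (f (a * b)) i) =
          h ^ (Multiplicative.toAdd (f a) i) * h ^ (Multiplicative.toAdd (f b) i) := by
        intro a b
        rw [map_mul]
        show h ^ ((Multiplicative.toAdd (f a) + Multiplicative.toAdd (f b)) i) = _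
        rw [Pi.add_apply, zpow_add]
      let ψ : ↥G →* E := MonoidHom.mk' (fun g => h ^ (Multiplicative.toAdd (f g) i)) hψmul
      have hψ : ∀ g, ψ g ∈ H := fun g => H.zpow_mem hh _
      obtain ⟨Kψ, hKψ, hKψmem⟩ := hK ψ hψ
      obtain ⟨g, hg⟩ := hKψmem x (hN Kψ hKψ)
      have hψgG : ψ g ∈ G := by
        have hψg : ψ g = x * (g : E)⁻¹ := by rw [← hg]; group
        rw [hψg]; exact G.mul_mem hxG (G.inv_mem g.2)
      have hψg1 : ψ g = 1 := hdisHG _ (hψ g) hψgG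
      have hgx' : (g : E) = x := by rw [← hg, hψg1, one_mul]
      have hgx : g = (⟨x, hxG⟩ : ↥G) := Subtype.ext hgx'
      rw [hgx] at hψg1
      exact hψg1
    -- construct the e-th root y of x inside G
    set w : Fin k → ℤ := fun i => v i / e with hw
    have hvw : (e : ℕ) • w = v := by
      funext i
      have := Int.mul_ediv_cancel' (hdvd i)
      simpa [hw, nsmul_eq_mul] using this
    set yg : ↥G := f.symm (Multiplicative.ofAdd w) with hyg
    have hye : yg ^ e = (⟨x, hxG⟩ : ↥G) := by
      apply f.injective
      rw [map_pow, MulEquiv.apply_symm_apply]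
      have h5 : Multiplicative.toAdd (Multiplicative.ofAdd w ^ e) = v := by
        rw [toAdd_pow, toAdd_ofAdd]; exact hvw
      rw [← ofAdd_toAdd (Multiplicative.ofAdd w ^ e), h5, hv, ofAdd_toAdd]
    have hyx : (yg : E) ^ e = x := by
      have h6 := congrArg Subtype.val hye
      rw [SubgroupClass.coe_pow] at h6
      exact h6
    have hyE' : (yg : E) ∈ E' := by
      rw [← QuotientGroup.eq_one_iff]
      apply tfree _ e hepos.ne'
      rw [← QuotientGroup.mk_pow, hyx, QuotientGroup.eq_one_iff]
      exact hxE'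
    have hymem : (yg : E) ∈ (H : Set E) * (K : Set E) := by rw [hKmul]; exact hyE'
    obtain ⟨h, hh, kk, hkk, hmul2⟩ := Set.mem_mul.mp hymem
    have hck : Commute h kk := by
      have hk2 : kk = h⁻¹ * (yg : E) := by rw [← hmul2]; group
      rw [hk2]
      exact Commute.mul_right (Commute.refl h).inv_right ((hcentral _ yg.2 h).symm)
    have hxk : x = kk ^ e := by
      rw [← hyx, ← hmul2, hck.mul_pow, he1 h hh, one_mul]
    rw [hxk]
    exact K.pow_mem hkk e
  · intro hx
    have hG' : (G ⊓ E') ≤ E' ∧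
        (H : Set E) * ((G ⊓ E' : Subgroup E) : Set E) = (E' : Set E) ∧ H ⊓ (G ⊓ E') = ⊥ := by
      refine ⟨inf_le_right, ?_, ?_⟩
      · ext z
        constructor
        · rintro ⟨h, hh, g, hg, rfl⟩
          exact E'.mul_mem (hHE' hh) hg.2
        · intro hz
          obtain ⟨h, hh, g, hg, hmul3⟩ := hdecomp z
          have hgE' : g ∈ E' := by
            have hgz : g = h⁻¹ * z := by rw [← hmul3]; group
            rw [hgz]; exact E'.mul_mem (E'.inv_mem (hHE' hh)) hz
          exact ⟨h, hh, g, ⟨hg, hgE'⟩, hmul3⟩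
      · rw [eq_bot_iff]
        intro z hz
        have hz1 : z = 1 := hdisHG z hz.1 hz.2.1
        simp [hz1, Subgroup.mem_bot]
    have hxE' : x ∈ E' := ((hx _ hG') : x ∈ G ⊓ E').2
    refine ⟨?_, hxE'⟩
    intro K hKc
    have hKE : (K ⊓ E') ≤ E' ∧
        (H : Set E) * ((K ⊓ E' : Subgroup E) : Set E) = (E' : Set E) ∧ H ⊓ (K ⊓ E') = ⊥ := by
      refine ⟨inf_le_right, ?_, ?_⟩
      · ext z
        constructor
        · rintro ⟨h, hh, kk, hkk, rfl⟩
          exact E'.mul_mem (hHE' hh) hkk.2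
        · intro hz
          obtain ⟨⟨h, kk⟩, hmul3⟩ := hKc.2 z
          have hkkE' : (kk : E) ∈ E' := by
            have hkz : (kk : E) = (h : E)⁻¹ * z := by rw [← hmul3]; group
            rw [hkz]; exact E'.mul_mem (E'.inv_mem (hHE' h.2)) hz
          exact ⟨h, h.2, kk, ⟨kk.2, hkkE'⟩, hmul3⟩
      · rw [eq_bot_iff]
        intro z hz
        have hz1 : z = 1 := Subgroup.disjoint_def.mp hKc.disjoint hz.1 hz.2.1
        simp [hz1, Subgroup.mem_bot]
    exact ((hx _ hKE) : x ∈ K ⊓ E').1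
end

section
/- Let (o ∈ X) be a germ of a Du Val singularity defined by x² + F₃(y,z) + R(y,z) = 0 with F₃ homogeneous cubic in (y,z) and R ≡ 0 mod (y,z)⁴. If F₃ has exactly two coprime factors, i.e. F₃(y,z) = l₁(y,z)²·l₂(y,z) with l₁, l₂ non-proportional linear forms, then (o ∈ X) is of type D_r for some r ≥ 5. If F₃ has three pairwise coprime linear factors, then (o ∈ X) is of type D₄. -/
/-- A germ of biholomorphism of `ℂ³` fixing the origin. -/
def LocalBiholoAt0 (φ : (Fin 3 → ℂ) → (Fin 3 → ℂ)) : Prop :=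
  φ 0 = 0 ∧ AnalyticAt ℂ φ 0 ∧
    ∃ ψ : (Fin 3 → ℂ) → (Fin 3 → ℂ), ψ 0 = 0 ∧ AnalyticAt ℂ ψ 0 ∧
      (∀ᶠ q in nhds (0 : Fin 3 → ℂ), ψ (φ q) = q) ∧
      (∀ᶠ q in nhds (0 : Fin 3 → ℂ), φ (ψ q) = q)

/-- Two holomorphic functions define isomorphic hypersurface germs at the origin of `ℂ³`
if they agree up to a local biholomorphism and a unit factor. -/
def GermEquiv (F G : (Fin 3 → ℂ) → ℂ) : Prop :=
  ∃ (φ : (Fin 3 → ℂ) → (Fin 3 → ℂ)) (u : (Fin 3 → ℂ) → ℂ),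
    LocalBiholoAt0 φ ∧ AnalyticAt ℂ u 0 ∧ u 0 ≠ 0 ∧
      ∀ᶠ q in nhds (0 : Fin 3 → ℂ), F q = u q * G (φ q)

/-- Normal form of a Du Val singularity of type `A_r` : `x² + y² + z^{r+1}`. -/
def duValA (r : ℕ) : (Fin 3 → ℂ) → ℂ := fun q => q 0 ^ 2 + q 1 ^ 2 + q 2 ^ (r + 1)

/-- Normal form of a Du Val singularity of type `D_r` : `x² + z·y² + z^{r-1}`. -/
def duValD (r : ℕ) : (Fin 3 → ℂ) → ℂ := fun q => q 0 ^ 2 + q 2 * q 1 ^ 2 + q 2 ^ (r - 1)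

/-- Normal form of a Du Val singularity of type `E₆` : `x² + y³ + z⁴`. -/
def duValE6 : (Fin 3 → ℂ) → ℂ := fun q => q 0 ^ 2 + q 1 ^ 3 + q 2 ^ 4

/-- Normal form of a Du Val singularity of type `E₇` : `x² + y³ + y·z³`. -/
def duValE7 : (Fin 3 → ℂ) → ℂ := fun q => q 0 ^ 2 + q 1 ^ 3 + q 1 * q 2 ^ 3

/-- Normal form of a Du Val singularity of type `E₈` : `x² + y³ + z⁵`. -/
def duValE8 : (Fin 3 → ℂ) → ℂ := fun q => q 0 ^ 2 + q 1 ^ 3 + q 2 ^ 5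

/-- `F` defines a germ of Du Val (rational double point) singularity at the origin. -/
def IsDuVal (F : (Fin 3 → ℂ) → ℂ) : Prop :=
  (∃ r : ℕ, 1 ≤ r ∧ GermEquiv F (duValA r)) ∨
  (∃ r : ℕ, 4 ≤ r ∧ GermEquiv F (duValD r)) ∨
  GermEquiv F duValE6 ∨ GermEquiv F duValE7 ∨ GermEquiv F duValE8

open Filter Topology

noncomputable section

def Ord4 (f : ℂ → ℂ) : Prop :=
  ∃ g : ℂ → ℂ, AnalyticAt ℂ g 0 ∧ ∀ᶠ t in 𝓝 (0:ℂ), f t = t ^ 4 * g t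

def Vset (H : (Fin 3 → ℂ) → ℂ) : Set (Fin 3 → ℂ) :=
  {w | ∃ γ : ℂ → (Fin 3 → ℂ), AnalyticAt ℂ γ 0 ∧ γ 0 = 0 ∧
        HasDerivAt γ w 0 ∧ Ord4 (fun t => H (γ t))}

lemma an_dslope {f : ℂ → ℂ} (hf : AnalyticAt ℂ f 0) : AnalyticAt ℂ (dslope f 0) 0 := by
  obtain ⟨p, hp⟩ := hf
  exact ⟨p.fslope, hp.has_fpower_series_dslope_fslope⟩

lemma factor_eq {f : ℂ → ℂ} (hf0 : f 0 = 0) (t : ℂ) : f t = t * dslope f 0 t := by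
  have := sub_smul_dslope f 0 t
  simp only [sub_zero, hf0, smul_eq_mul] at this
  exact this.symm

/-- limit uniqueness: if `A t = t * B t` near (punctured) `0` with `A, B` continuous at `0`,
then `A 0 = 0`. -/
lemma limit_zero {A B : ℂ → ℂ} (hA : ContinuousAt A 0) (hB : ContinuousAt B 0)
    (h : ∀ᶠ t in 𝓝[≠] (0:ℂ), A t = t * B t) : A 0 = 0 := by
  have h1 : Tendsto A (𝓝[≠] (0:ℂ)) (𝓝 (A 0)) :=
    (hA.continuousWithinAt (s := {(0:ℂ)}ᶜ)).tendsto
  have h2 : Tendsto (fun t => t * B t) (𝓝[≠] (0:ℂ)) (𝓝 (0 * B 0)) := by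
    exact ((continuousAt_id.mul hB).continuousWithinAt (s := {(0:ℂ)}ᶜ)).tendsto
  rw [zero_mul] at h2
  exact tendsto_nhds_unique (h1.congr' h) h2

/-- core extraction lemma -/
lemma core {g0 g1 g2 ρ : ℂ → ℂ} (c30 c21 c12 c03 : ℂ)
    (h0 : AnalyticAt ℂ g0 0) (h1 : AnalyticAt ℂ g1 0) (h2 : AnalyticAt ℂ g2 0)
    (hρ : AnalyticAt ℂ ρ 0)
    (hev : ∀ᶠ t in 𝓝 (0:ℂ), t^2 * (g0 t)^2
        + t^3 * (c30 * g1 t ^3 + c21 * g1 t^2 * g2 t + c12 * g1 t * g2 t^2 + c03 * g2 t^3)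
        = t^4 * ρ t) :
    g0 0 = 0 ∧
      c30 * g1 0 ^3 + c21 * g1 0 ^2 * g2 0 + c12 * g1 0 * g2 0 ^2 + c03 * g2 0 ^3 = 0 := by
  set C : ℂ → ℂ := fun t => c30 * g1 t ^3 + c21 * g1 t^2 * g2 t + c12 * g1 t * g2 t^2
      + c03 * g2 t^3 with hC
  have hCc : ContinuousAt C 0 := by
    have := h1.continuousAt; have := h2.continuousAt; fun_prop
  have hev' : ∀ᶠ t in 𝓝[≠] (0:ℂ), t^2 * (g0 t)^2 + t^3 * C t = t^4 * ρ t :=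
    nhdsWithin_le_nhds hev
  -- step 1 : g0 0 = 0
  have hg00 : g0 0 = 0 := by
    have hstep : ∀ᶠ t in 𝓝[≠] (0:ℂ), (fun t => g0 t ^ 2 + t * C t) t
        = t * ((fun t => t * ρ t) t) := by
      filter_upwards [hev', self_mem_nhdsWithin] with t ht ht0
      have ht2 : (t:ℂ)^2 ≠ 0 := pow_ne_zero _ ht0
      apply mul_left_cancel₀ ht2
      linear_combination ht
    have := limit_zero (A := fun t => g0 t ^ 2 + t * C t) (B := fun t => t * ρ t)
      (by have := h0.continuousAt; fun_prop) (by have := hρ.continuousAt; fun_prop) hstep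
    simpa [sq_eq_zero_iff] using this
  refine ⟨hg00, ?_⟩
  -- step 2
  set p : ℂ → ℂ := dslope g0 0 with hp
  have hpa : AnalyticAt ℂ p 0 := an_dslope h0
  have hfac : ∀ t, g0 t = t * p t := factor_eq hg00
  have hstep : ∀ᶠ t in 𝓝[≠] (0:ℂ), C t = t * ((fun t => ρ t - p t ^ 2) t) := by
    filter_upwards [hev', self_mem_nhdsWithin] with t ht ht0
    rw [hfac t] at ht
    have ht3 : (t:ℂ)^3 ≠ 0 := pow_ne_zero _ ht0
    have : t^3 * (C t) = t^3 * (t * (ρ t - p t ^2)) := by linear_combination ht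
    exact mul_left_cancel₀ ht3 this
  have := limit_zero (A := C) (B := fun t => ρ t - p t ^ 2) hCc
    (by have := hρ.continuousAt; have := hpa.continuousAt; fun_prop) hstep
  simpa [hC] using this

lemma transport {F G : (Fin 3 → ℂ) → ℂ} (h : GermEquiv F G) :
    ∃ T S : (Fin 3 → ℂ) →L[ℂ] (Fin 3 → ℂ),
      (∀ x, S (T x) = x) ∧ (∀ x, T (S x) = x) ∧
      (∀ w ∈ Vset F, T w ∈ Vset G) ∧ (∀ w ∈ Vset G, S w ∈ Vset F) := by
  obtain ⟨φ, u, ⟨hφ0, hφa, ψ, hψ0, hψa, hψφ, hφψ⟩, hua, hu0, hFG⟩ := h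
  have hψa0 : AnalyticAt ℂ ψ 0 := hψa
  refine ⟨fderiv ℂ φ 0, fderiv ℂ ψ 0, ?_, ?_, ?_, ?_⟩
  · -- S ∘ T = id
    have hφd : HasFDerivAt φ (fderiv ℂ φ 0) 0 := hφa.differentiableAt.hasFDerivAt
    have hψd : HasFDerivAt ψ (fderiv ℂ ψ 0) (φ 0) := by
      rw [hφ0]; exact hψa.differentiableAt.hasFDerivAt
    have hcomp : HasFDerivAt (fun q => ψ (φ q)) ((fderiv ℂ ψ 0).comp (fderiv ℂ φ 0)) 0 :=
      hψd.comp 0 hφd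
    have hid : HasFDerivAt (fun q : Fin 3 → ℂ => q)
        ((fderiv ℂ ψ 0).comp (fderiv ℂ φ 0)) 0 := hcomp.congr_of_eventuallyEq (Filter.EventuallyEq.symm (hψφ : (fun q => ψ (φ q)) =ᶠ[𝓝 (0 : Fin 3 → ℂ)] fun q => q))
    have := hid.unique (hasFDerivAt_id 0)
    intro x
    have := congrArg (fun (L : (Fin 3 → ℂ) →L[ℂ] (Fin 3 → ℂ)) => L x) this
    simpa using this
  · have hψd : HasFDerivAt ψ (fderiv ℂ ψ 0) 0 := hψa.differentiableAt.hasFDerivAt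
    have hφd : HasFDerivAt φ (fderiv ℂ φ 0) (ψ 0) := by
      rw [hψ0]; exact hφa.differentiableAt.hasFDerivAt
    have hcomp : HasFDerivAt (fun q => φ (ψ q)) ((fderiv ℂ φ 0).comp (fderiv ℂ ψ 0)) 0 :=
      hφd.comp 0 hψd
    have hid : HasFDerivAt (fun q : Fin 3 → ℂ => q)
        ((fderiv ℂ φ 0).comp (fderiv ℂ ψ 0)) 0 := hcomp.congr_of_eventuallyEq (Filter.EventuallyEq.symm (hφψ : (fun q => φ (ψ q)) =ᶠ[𝓝 (0 : Fin 3 → ℂ)] fun q => q))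
    have := hid.unique (hasFDerivAt_id 0)
    intro x
    have := congrArg (fun (L : (Fin 3 → ℂ) →L[ℂ] (Fin 3 → ℂ)) => L x) this
    simpa using this
  · -- forward
    rintro w ⟨γ, hγa, hγ0, hγd, g, hga, hge⟩
    have hγt : Tendsto γ (𝓝 0) (𝓝 (0 : Fin 3 → ℂ)) := by
      have := hγa.continuousAt.tendsto; rwa [hγ0] at this
    refine ⟨fun t => φ (γ t), ?_, by simp [hγ0, hφ0], ?_, ?_⟩
    · exact (by rw [hγ0]; exact hφa : AnalyticAt ℂ φ (γ 0)).comp hγa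
    · have hφd : HasFDerivAt φ (fderiv ℂ φ 0) (γ 0) := by
        rw [hγ0]; exact hφa.differentiableAt.hasFDerivAt
      exact hφd.comp_hasDerivAt 0 hγd
    · -- Ord4
      have hFγ : ∀ᶠ t in 𝓝 (0:ℂ), F (γ t) = u (γ t) * G (φ (γ t)) := hγt.eventually hFG
      have hune : ∀ᶠ t in 𝓝 (0:ℂ), u (γ t) ≠ 0 := by
        have hcu : ContinuousAt (fun t => u (γ t)) 0 := by
          apply ContinuousAt.comp (x := (0:ℂ)) _ hγa.continuousAt
          rw [hγ0]; exact hua.continuousAt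
        exact hcu.eventually_ne (by simp only [hγ0]; exact hu0)
      refine ⟨fun t => g t / u (γ t), hga.div ((by rw [hγ0]; exact hua :
          AnalyticAt ℂ u (γ 0)).comp hγa) (by rw [hγ0]; exact hu0), ?_⟩
      filter_upwards [hFγ, hge, hune] with t h1 h2 h3
      field_simp
      linear_combination h2 - h1
  · -- backward
    rintro w ⟨δ, hδa, hδ0, hδd, g, hga, hge⟩
    have hδt : Tendsto δ (𝓝 0) (𝓝 (0 : Fin 3 → ℂ)) := by
      have := hδa.continuousAt.tendsto; rwa [hδ0] at this
    have hψδa : AnalyticAt ℂ (fun t => ψ (δ t)) 0 :=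
      (by rw [hδ0]; exact hψa : AnalyticAt ℂ ψ (δ 0)).comp hδa
    have hψδt : Tendsto (fun t => ψ (δ t)) (𝓝 0) (𝓝 (0 : Fin 3 → ℂ)) := by
      have := hψδa.continuousAt.tendsto; simpa [hδ0, hψ0] using this
    refine ⟨fun t => ψ (δ t), hψδa, by simp [hδ0, hψ0], ?_, ?_⟩
    · have hψd : HasFDerivAt ψ (fderiv ℂ ψ 0) (δ 0) := by
        rw [hδ0]; exact hψa.differentiableAt.hasFDerivAt
      exact hψd.comp_hasDerivAt 0 hδd
    · have hFψδ : ∀ᶠ t in 𝓝 (0:ℂ), F (ψ (δ t)) = u (ψ (δ t)) * G (φ (ψ (δ t))) :=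
        hψδt.eventually hFG
      have hinv : ∀ᶠ t in 𝓝 (0:ℂ), φ (ψ (δ t)) = δ t := hδt.eventually hφψ
      have huψδ : AnalyticAt ℂ (fun t => u (ψ (δ t))) 0 :=
        AnalyticAt.comp (f := fun t => ψ (δ t)) (g := u) (x := (0:ℂ))
          (by show AnalyticAt ℂ u (ψ (δ 0)); rw [hδ0, hψ0]; exact hua) hψδa
      refine ⟨fun t => u (ψ (δ t)) * g t, huψδ.mul hga, ?_⟩
      filter_upwards [hFψδ, hinv, hge] with t h1 h2 h3
      rw [h1, h2, h3]; ring

lemma Vupper {H : (Fin 3 → ℂ) → ℂ} (c30 c21 c12 c03 : ℂ)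
    (hH : ∀ g1 g2 : ℂ → ℂ, AnalyticAt ℂ g1 0 → AnalyticAt ℂ g2 0 →
      ∃ ρ : ℂ → ℂ, AnalyticAt ℂ ρ 0 ∧ ∀ x t : ℂ,
        H (fun i => ![x, t * g1 t, t * g2 t] i)
          = x ^ 2 + t ^ 3 * (c30 * g1 t ^ 3 + c21 * g1 t ^ 2 * g2 t
              + c12 * g1 t * g2 t ^ 2 + c03 * g2 t ^ 3) + t ^ 4 * ρ t)
    {w : Fin 3 → ℂ} (hw : w ∈ Vset H) :
    w 0 = 0 ∧ c30 * w 1 ^ 3 + c21 * w 1 ^ 2 * w 2 + c12 * w 1 * w 2 ^ 2 + c03 * w 2 ^ 3 = 0 := by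
  obtain ⟨γ, hγa, hγ0, hγd, G, hGa, hGe⟩ := hw
  have hγia : ∀ i : Fin 3, AnalyticAt ℂ (fun t => γ t i) 0 := fun i =>
    ((ContinuousLinearMap.proj (R := ℂ) (φ := fun _ : Fin 3 => ℂ) i).analyticAt _).comp hγa
  have hγi0 : ∀ i : Fin 3, γ 0 i = 0 := fun i => by rw [hγ0]; rfl
  have hγid : ∀ i : Fin 3, HasDerivAt (fun t => γ t i) (w i) 0 := fun i =>
    ((ContinuousLinearMap.proj (R := ℂ) (φ := fun _ : Fin 3 => ℂ) i).hasFDerivAt).comp_hasDerivAt 0 hγd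
  set g0 := dslope (fun t => γ t 0) 0 with hg0
  set g1 := dslope (fun t => γ t 1) 0 with hg1
  set g2 := dslope (fun t => γ t 2) 0 with hg2
  have hg0a : AnalyticAt ℂ g0 0 := an_dslope (hγia 0)
  have hg1a : AnalyticAt ℂ g1 0 := an_dslope (hγia 1)
  have hg2a : AnalyticAt ℂ g2 0 := an_dslope (hγia 2)
  have hf0 : ∀ t, γ t 0 = t * g0 t := factor_eq (hγi0 0)
  have hf1 : ∀ t, γ t 1 = t * g1 t := factor_eq (hγi0 1)
  have hf2 : ∀ t, γ t 2 = t * g2 t := factor_eq (hγi0 2)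
  have hv0 : g0 0 = w 0 := by rw [hg0, dslope_same]; exact (hγid 0).deriv
  have hv1 : g1 0 = w 1 := by rw [hg1, dslope_same]; exact (hγid 1).deriv
  have hv2 : g2 0 = w 2 := by rw [hg2, dslope_same]; exact (hγid 2).deriv
  obtain ⟨ρ, hρa, hρ⟩ := hH g1 g2 hg1a hg2a
  have key : ∀ t : ℂ, H (γ t) = (t * g0 t) ^ 2 + t ^ 3 * (c30 * g1 t ^ 3
      + c21 * g1 t ^ 2 * g2 t + c12 * g1 t * g2 t ^ 2 + c03 * g2 t ^ 3) + t ^ 4 * ρ t := by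
    intro t
    have : γ t = fun i => ![γ t 0, t * g1 t, t * g2 t] i := by
      funext i
      fin_cases i <;> simp [hf1, hf2]
    rw [this, hρ (γ t 0) t, hf0]
  have hev : ∀ᶠ t in 𝓝 (0:ℂ), t^2 * (g0 t)^2
        + t^3 * (c30 * g1 t ^3 + c21 * g1 t^2 * g2 t + c12 * g1 t * g2 t^2 + c03 * g2 t^3)
        = t^4 * ((fun t => G t - ρ t) t) := by
    filter_upwards [hGe] with t h1
    simp only [key t] at h1
    linear_combination h1
  have := core c30 c21 c12 c03 hg0a hg1a hg2a (hGa.sub hρa) hev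
  rw [hv0, hv1, hv2] at this
  exact this

lemma curve_mk {H : (Fin 3 → ℂ) → ℂ} {p0 p1 p2 : ℂ → ℂ}
    (h0 : AnalyticAt ℂ p0 0) (h1 : AnalyticAt ℂ p1 0) (h2 : AnalyticAt ℂ p2 0)
    (z0 : p0 0 = 0) (z1 : p1 0 = 0) (z2 : p2 0 = 0)
    {d0 d1 d2 : ℂ} (hd0 : HasDerivAt p0 d0 0) (hd1 : HasDerivAt p1 d1 0)
    (hd2 : HasDerivAt p2 d2 0)
    {g : ℂ → ℂ} (hg : AnalyticAt ℂ g 0)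
    (hev : ∀ t : ℂ, H ![p0 t, p1 t, p2 t] = t ^ 4 * g t) :
    (![d0, d1, d2] : Fin 3 → ℂ) ∈ Vset H := by
  refine ⟨fun t => ![p0 t, p1 t, p2 t], ?_, ?_, ?_, ⟨g, hg, Filter.Eventually.of_forall hev⟩⟩
  · exact analyticAt_pi_iff.mpr (by intro i; fin_cases i <;> simpa)
  · funext i; fin_cases i <;> simpa
  · exact hasDerivAt_pi.mpr (by intro i; fin_cases i <;> simpa)

lemma ind_of_det {v v' : Fin 3 → ℂ} {i j : Fin 3}
    (h : v i * v' j - v' i * v j ≠ 0) :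
    ∀ l μ : ℂ, l • v + μ • v' = 0 → l = 0 ∧ μ = 0 := by
  intro l μ hlμ
  have hi := congrFun hlμ i
  have hj := congrFun hlμ j
  simp only [Pi.add_apply, Pi.smul_apply, smul_eq_mul, Pi.zero_apply] at hi hj
  have e1 : l * (v i * v' j - v' i * v j) = 0 := by linear_combination v' j * hi - v' i * hj
  have e2 : μ * (v i * v' j - v' i * v j) = 0 := by linear_combination v i * hj - v j * hi
  exact ⟨by rcases mul_eq_zero.mp e1 with h' | h'; exact h'; exact absurd h' h,
    by rcases mul_eq_zero.mp e2 with h' | h'; exact h'; exact absurd h' h⟩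

lemma pair_contra (A B : (Fin 3 → ℂ) →L[ℂ] (Fin 3 → ℂ)) (hBA : ∀ x, B (A x) = x)
    {w w' : Fin 3 → ℂ}
    (hInd : ∀ l μ : ℂ, l • w + μ • w' = 0 → l = 0 ∧ μ = 0)
    {α β : ℂ} (hαβ : ¬(α = 0 ∧ β = 0))
    (h0 : A w 0 = 0) (h0' : A w' 0 = 0)
    (hl : α * A w 1 + β * A w 2 = 0) (hl' : α * A w' 1 + β * A w' 2 = 0) : False := by
  have e1 : α * (A w 1 * A w' 2 - A w 2 * A w' 1) = 0 := by
    linear_combination A w' 2 * hl - A w 2 * hl'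
  have e2 : β * (A w 1 * A w' 2 - A w 2 * A w' 1) = 0 := by
    linear_combination A w 1 * hl' - A w' 1 * hl
  have hdet : A w 1 * A w' 2 - A w 2 * A w' 1 = 0 := by
    rcases not_and_or.mp hαβ with hα | hβ
    · rcases mul_eq_zero.mp e1 with h' | h'; exact absurd h' hα; exact h'
    · rcases mul_eq_zero.mp e2 with h' | h'; exact absurd h' hβ; exact h'
  -- produce a dependency between w and w'
  have dep : ∀ l μ : ℂ, l • A w + μ • A w' = 0 → l = 0 ∧ μ = 0 := by
    intro l μ hz
    have hz' : A (l • w + μ • w') = 0 := by rw [map_add, map_smul, map_smul]; exact hz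
    have : l • w + μ • w' = 0 := by
      calc l • w + μ • w' = B (A (l • w + μ • w')) := (hBA _).symm
        _ = 0 := by rw [hz']; exact map_zero B
    exact hInd l μ this
  by_cases hv : A w 1 = 0 ∧ A w 2 = 0
  · -- A w = 0, so w = 0 and 1 • w + 0 • w' = 0 gives 1 = 0
    have hz : (1:ℂ) • A w + (0:ℂ) • A w' = 0 := by
      funext i
      simp only [Pi.add_apply, Pi.smul_apply, smul_eq_mul, Pi.zero_apply, one_mul, zero_mul,
        add_zero]
      fin_cases i
      · exact h0
      · exact hv.1
      · exact hv.2
      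
    exact one_ne_zero (dep 1 0 hz).1
  · rcases not_and_or.mp hv with hv1 | hv2
    · have hz : (A w' 1) • A w + (-(A w 1)) • A w' = 0 := by
        funext i
        simp only [Pi.add_apply, Pi.smul_apply, smul_eq_mul, Pi.zero_apply]
        fin_cases i
        · show A w' 1 * A w 0 + -A w 1 * A w' 0 = 0
          rw [h0, h0']; ring
        · show A w' 1 * A w 1 + -A w 1 * A w' 1 = 0
          ring
        · show A w' 1 * A w 2 + -A w 1 * A w' 2 = 0
          linear_combination -hdet
      exact hv1 (neg_eq_zero.mp (dep _ _ hz).2)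
    · have hz : (A w' 2) • A w + (-(A w 2)) • A w' = 0 := by
        funext i
        simp only [Pi.add_apply, Pi.smul_apply, smul_eq_mul, Pi.zero_apply]
        fin_cases i
        · show A w' 2 * A w 0 + -A w 2 * A w' 0 = 0
          rw [h0, h0']; ring
        · show A w' 2 * A w 1 + -A w 2 * A w' 1 = 0
          linear_combination hdet
        · show A w' 2 * A w 2 + -A w 2 * A w' 2 = 0
          ring
      exact hv2 (neg_eq_zero.mp (dep _ _ hz).2)

lemma main_pigeon {n m : ℕ} (hmn : m < n)
    (A B : (Fin 3 → ℂ) →L[ℂ] (Fin 3 → ℂ)) (hBA : ∀ x, B (A x) = x)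
    (w : Fin n → (Fin 3 → ℂ))
    (hInd : ∀ i j, i ≠ j → ∃ a b : Fin 3, w i a * w j b - w j a * w i b ≠ 0)
    (lines : Fin m → ℂ × ℂ) (hlines : ∀ k, ¬((lines k).1 = 0 ∧ (lines k).2 = 0))
    (h0 : ∀ i, A (w i) 0 = 0)
    (hl : ∀ i, ∃ k, (lines k).1 * A (w i) 1 + (lines k).2 * A (w i) 2 = 0) : False := by
  classical
  choose f hf using hl
  obtain ⟨i, j, hij, hfij⟩ := Fintype.exists_ne_map_eq_of_card_lt f (by simpa using hmn)
  obtain ⟨a, b, hab⟩ := hInd i j hij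
  exact pair_contra A B hBA (ind_of_det hab) (hlines (f j)) (h0 i) (h0 j)
    (by rw [← hfij]; exact hf i) (hf j)

open Complex in
lemma upperE6 {w : Fin 3 → ℂ} (hw : w ∈ Vset duValE6) :
    w 0 = 0 ∧ w 1 = 0 := by
  have hH : ∀ g1 g2 : ℂ → ℂ, AnalyticAt ℂ g1 0 → AnalyticAt ℂ g2 0 →
      ∃ ρ : ℂ → ℂ, AnalyticAt ℂ ρ 0 ∧ ∀ x t : ℂ,
        duValE6 (fun i => ![x, t * g1 t, t * g2 t] i)
          = x ^ 2 + t ^ 3 * (1 * g1 t ^ 3 + 0 * g1 t ^ 2 * g2 t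
              + 0 * g1 t * g2 t ^ 2 + 0 * g2 t ^ 3) + t ^ 4 * ρ t := by
    intro g1 g2 h1 h2
    refine ⟨fun t => g2 t ^ 4, h2.pow 4, fun x t => ?_⟩
    simp only [duValE6, Matrix.cons_val_zero, Matrix.cons_val_one, Matrix.head_cons,
      Matrix.cons_val_two, Matrix.tail_cons]
    ring
  obtain ⟨h0, hc⟩ := Vupper 1 0 0 0 hH hw
  refine ⟨h0, ?_⟩
  have h3 : w 1 ^ 3 = 0 := by linear_combination hc
  exact pow_eq_zero_iff (three_ne_zero) |>.mp h3

open Complex in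
lemma upperE7 {w : Fin 3 → ℂ} (hw : w ∈ Vset duValE7) :
    w 0 = 0 ∧ w 1 = 0 := by
  have hH : ∀ g1 g2 : ℂ → ℂ, AnalyticAt ℂ g1 0 → AnalyticAt ℂ g2 0 →
      ∃ ρ : ℂ → ℂ, AnalyticAt ℂ ρ 0 ∧ ∀ x t : ℂ,
        duValE7 (fun i => ![x, t * g1 t, t * g2 t] i)
          = x ^ 2 + t ^ 3 * (1 * g1 t ^ 3 + 0 * g1 t ^ 2 * g2 t
              + 0 * g1 t * g2 t ^ 2 + 0 * g2 t ^ 3) + t ^ 4 * ρ t := by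
    intro g1 g2 h1 h2
    refine ⟨fun t => g1 t * g2 t ^ 3, h1.mul (h2.pow 3), fun x t => ?_⟩
    simp only [duValE7, Matrix.cons_val_zero, Matrix.cons_val_one, Matrix.head_cons,
      Matrix.cons_val_two, Matrix.tail_cons]
    ring
  obtain ⟨h0, hc⟩ := Vupper 1 0 0 0 hH hw
  refine ⟨h0, ?_⟩
  have h3 : w 1 ^ 3 = 0 := by linear_combination hc
  exact pow_eq_zero_iff (three_ne_zero) |>.mp h3

open Complex in
lemma upperE8 {w : Fin 3 → ℂ} (hw : w ∈ Vset duValE8) :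
    w 0 = 0 ∧ w 1 = 0 := by
  have hH : ∀ g1 g2 : ℂ → ℂ, AnalyticAt ℂ g1 0 → AnalyticAt ℂ g2 0 →
      ∃ ρ : ℂ → ℂ, AnalyticAt ℂ ρ 0 ∧ ∀ x t : ℂ,
        duValE8 (fun i => ![x, t * g1 t, t * g2 t] i)
          = x ^ 2 + t ^ 3 * (1 * g1 t ^ 3 + 0 * g1 t ^ 2 * g2 t
              + 0 * g1 t * g2 t ^ 2 + 0 * g2 t ^ 3) + t ^ 4 * ρ t := by
    intro g1 g2 h1 h2
    refine ⟨fun t => t * g2 t ^ 5, ((analyticAt_id (𝕜 := ℂ) (E := ℂ)).mul (h2.pow 5)), fun x t => ?_⟩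
    simp only [duValE8, Matrix.cons_val_zero, Matrix.cons_val_one, Matrix.head_cons,
      Matrix.cons_val_two, Matrix.tail_cons]
    ring
  obtain ⟨h0, hc⟩ := Vupper 1 0 0 0 hH hw
  refine ⟨h0, ?_⟩
  have h3 : w 1 ^ 3 = 0 := by linear_combination hc
  exact pow_eq_zero_iff (three_ne_zero) |>.mp h3

open Complex in
lemma upperD {r : ℕ} (hr : 5 ≤ r) {w : Fin 3 → ℂ} (hw : w ∈ Vset (duValD r)) :
    w 0 = 0 ∧ (w 1 = 0 ∨ w 2 = 0) := by
  have hH : ∀ g1 g2 : ℂ → ℂ, AnalyticAt ℂ g1 0 → AnalyticAt ℂ g2 0 →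
      ∃ ρ : ℂ → ℂ, AnalyticAt ℂ ρ 0 ∧ ∀ x t : ℂ,
        (duValD r) (fun i => ![x, t * g1 t, t * g2 t] i)
          = x ^ 2 + t ^ 3 * (0 * g1 t ^ 3 + 1 * g1 t ^ 2 * g2 t
              + 0 * g1 t * g2 t ^ 2 + 0 * g2 t ^ 3) + t ^ 4 * ρ t := by
    intro g1 g2 h1 h2
    refine ⟨fun t => t ^ (r - 5) * g2 t ^ (r - 1),
      ((analyticAt_id (𝕜 := ℂ) (E := ℂ)).pow (r-5)).mul (h2.pow (r-1)), fun x t => ?_⟩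
    simp only [duValD, Matrix.cons_val_zero, Matrix.cons_val_one, Matrix.head_cons,
      Matrix.cons_val_two, Matrix.tail_cons]
    rw [mul_pow, show r - 1 = 4 + (r - 5) by omega, pow_add]
    ring
  obtain ⟨h0, hc⟩ := Vupper 0 1 0 0 hH hw
  refine ⟨h0, ?_⟩
  have h3 : w 1 ^ 2 * w 2 = 0 := by linear_combination hc
  rcases mul_eq_zero.mp h3 with h | h
  · exact Or.inl (pow_eq_zero_iff (two_ne_zero) |>.mp h)
  · exact Or.inr h

open Complex in
lemma memD4 : ∃ v : Fin 3 → Fin 3 → ℂ, (∀ i, v i ∈ Vset (duValD 4)) ∧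
    ∀ i j, i ≠ j → ∃ a b : Fin 3, v i a * v j b - v j a * v i b ≠ 0 := by
  refine ⟨![![0,1,0], ![0,I,1], ![0,-I,1]], ?_, ?_⟩
  · intro i
    fin_cases i
    · simpa using curve_mk (H := duValD 4) (p0 := fun _ => 0) (p1 := fun t => t * 1)
        (p2 := fun _ => 0) analyticAt_const ((analyticAt_id (𝕜 := ℂ) (E := ℂ)).mul analyticAt_const)
        analyticAt_const rfl (by simp) rfl
        (hasDerivAt_const 0 0) ((hasDerivAt_id 0).mul_const 1) (hasDerivAt_const 0 0)
        (g := fun _ => 0) analyticAt_const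
        (fun t => by simp [duValD])
    · simpa using curve_mk (H := duValD 4) (p0 := fun _ => 0) (p1 := fun t => t * I)
        (p2 := fun t => t * 1) analyticAt_const ((analyticAt_id (𝕜 := ℂ) (E := ℂ)).mul analyticAt_const)
        ((analyticAt_id (𝕜 := ℂ) (E := ℂ)).mul analyticAt_const) rfl (by simp) (by simp)
        (hasDerivAt_const 0 0) ((hasDerivAt_id 0).mul_const I) ((hasDerivAt_id 0).mul_const 1)
        (g := fun _ => 0) analyticAt_const
        (fun t => by
          simp only [duValD, Matrix.cons_val_zero, Matrix.cons_val_one, Matrix.head_cons,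
            Matrix.cons_val_two, Matrix.tail_cons]
          linear_combination (t*1*t^2) * Complex.I_sq)
    · simpa using curve_mk (H := duValD 4) (p0 := fun _ => 0) (p1 := fun t => t * (-I))
        (p2 := fun t => t * 1) analyticAt_const ((analyticAt_id (𝕜 := ℂ) (E := ℂ)).mul analyticAt_const)
        ((analyticAt_id (𝕜 := ℂ) (E := ℂ)).mul analyticAt_const) rfl (by simp) (by simp)
        (hasDerivAt_const 0 0) ((hasDerivAt_id 0).mul_const (-I)) ((hasDerivAt_id 0).mul_const 1)
        (g := fun _ => 0) analyticAt_const
        (fun t => by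
          simp only [duValD, Matrix.cons_val_zero, Matrix.cons_val_one, Matrix.head_cons,
            Matrix.cons_val_two, Matrix.tail_cons]
          linear_combination (t*1*t^2) * Complex.I_sq)
  · intro i j hij
    fin_cases i <;> fin_cases j <;> first
      | exact absurd rfl hij
      | (refine ⟨1, 2, ?_⟩
         simp only [Matrix.cons_val_zero, Matrix.cons_val_one, Matrix.head_cons,
           Matrix.cons_val_two, Matrix.tail_cons]
         intro h
         simp only [sub_eq_zero] at h
         simp [Complex.ext_iff, Matrix.cons_val_succ', Fin.isValue] at h <;> norm_num at h)

lemma mem_line {H : (Fin 3 → ℂ) → ℂ} (a b c : ℂ) {g : ℂ → ℂ} (hg : AnalyticAt ℂ g 0)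
    (h : ∀ t : ℂ, H ![t * a, t * b, t * c] = t ^ 4 * g t) :
    (![a, b, c] : Fin 3 → ℂ) ∈ Vset H := by
  have d : ∀ x : ℂ, HasDerivAt (fun t : ℂ => t * x) x 0 := fun x => by
    simpa using (hasDerivAt_id (0:ℂ)).mul_const x
  have an : ∀ x : ℂ, AnalyticAt ℂ (fun t : ℂ => t * x) 0 := fun x =>
    (analyticAt_id (𝕜 := ℂ) (E := ℂ)).mul analyticAt_const
  exact curve_mk (an a) (an b) (an c) (by simp) (by simp) (by simp) (d a) (d b) (d c) hg h

open Complex in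
lemma memA {r : ℕ} (hr : 1 ≤ r) : ∃ v : Fin 4 → Fin 3 → ℂ,
    (∀ i, v i ∈ Vset (duValA r)) ∧
    ∀ i j, i ≠ j → ∃ a b : Fin 3, v i a * v j b - v j a * v i b ≠ 0 := by
  rcases (by omega : r = 1 ∨ 2 ≤ r) with rfl | hr2
  · refine ⟨![![1,I,0], ![0,2*I,2], ![-3,5*I,4], ![-8,10*I,6]], ?_, ?_⟩
    · intro i
      have hz : AnalyticAt ℂ (fun _ : ℂ => (0:ℂ)) 0 := analyticAt_const
      fin_cases i
      · exact mem_line 1 I 0 hz (fun t => by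
          simp only [duValA, Matrix.cons_val_zero, Matrix.cons_val_one, Matrix.head_cons,
            Matrix.cons_val_two, Matrix.tail_cons]
          linear_combination t^2 * Complex.I_sq)
      · exact mem_line 0 (2*I) 2 hz (fun t => by
          simp only [duValA, Matrix.cons_val_zero, Matrix.cons_val_one, Matrix.head_cons,
            Matrix.cons_val_two, Matrix.tail_cons]
          linear_combination 4*t^2 * Complex.I_sq)
      · exact mem_line (-3) (5*I) 4 hz (fun t => by
          simp only [duValA, Matrix.cons_val_zero, Matrix.cons_val_one, Matrix.head_cons,
            Matrix.cons_val_two, Matrix.tail_cons]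
          linear_combination 25*t^2 * Complex.I_sq)
      · exact mem_line (-8) (10*I) 6 hz (fun t => by
          simp only [duValA, Matrix.cons_val_zero, Matrix.cons_val_one, Matrix.head_cons,
            Matrix.cons_val_two, Matrix.tail_cons]
          linear_combination 100*t^2 * Complex.I_sq)
    · intro i j hij
      fin_cases i <;> fin_cases j <;> first
        | exact absurd rfl hij
        | exact ⟨0, 2, by
            simp only [Matrix.cons_val_zero, Matrix.cons_val_one, Matrix.head_cons,
              Matrix.cons_val_two, Matrix.tail_cons, Matrix.cons_val', Matrix.cons_val_fin_one,
              Matrix.empty_val', Matrix.cons_val_three]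
            norm_num⟩
  · have hmem : ∀ c : ℂ, (![1, I, c] : Fin 3 → ℂ) ∈ Vset (duValA r) := by
      intro c
      rcases (by omega : r = 2 ∨ 3 ≤ r) with rfl | hr3
      · -- curved curve
        have hp1a : AnalyticAt ℂ (fun t : ℂ => I*t + (I*c^3/2)*t^2) 0 :=
          (analyticAt_const.mul (analyticAt_id (𝕜 := ℂ) (E := ℂ))).add
            (analyticAt_const.mul ((analyticAt_id (𝕜 := ℂ) (E := ℂ)).pow 2))
        have hp1d : HasDerivAt (fun t : ℂ => I*t + (I*c^3/2)*t^2) I 0 := by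
          have := (((hasDerivAt_id (0:ℂ)).const_mul I)).add
            (((hasDerivAt_pow 2 (0:ℂ))).const_mul (I*c^3/2))
          simpa [Pi.add_def] using this
        have := curve_mk (H := duValA 2) (p0 := fun t : ℂ => t * 1)
          (p1 := fun t : ℂ => I*t + (I*c^3/2)*t^2) (p2 := fun t : ℂ => t * c)
          ((analyticAt_id (𝕜 := ℂ) (E := ℂ)).mul analyticAt_const) hp1a
          ((analyticAt_id (𝕜 := ℂ) (E := ℂ)).mul analyticAt_const)
          (by simp) (by simp) (by simp)
          (by simpa using (hasDerivAt_id (0:ℂ)).mul_const 1) hp1d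
          (by simpa using (hasDerivAt_id (0:ℂ)).mul_const c)
          (g := fun _ => (I*c^3/2)^2) analyticAt_const
          (fun t => by
            simp only [duValA, Matrix.cons_val_zero, Matrix.cons_val_one, Matrix.head_cons,
              Matrix.cons_val_two, Matrix.tail_cons]
            linear_combination (t^2 + c^3*t^3 + (c^6/4)*t^4 - (c^6/4)*t^4) * Complex.I_sq)
        simpa using this
      · exact mem_line 1 I c (g := fun t => t^(r-3) * c^(r+1))
          (((analyticAt_id (𝕜 := ℂ) (E := ℂ)).pow (r-3)).mul analyticAt_const)
          (fun t => by
            simp only [duValA, Matrix.cons_val_zero, Matrix.cons_val_one, Matrix.head_cons,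
              Matrix.cons_val_two, Matrix.tail_cons]
            rw [mul_pow, show r + 1 = 4 + (r - 3) by omega, pow_add]
            linear_combination t^2 * Complex.I_sq)
    refine ⟨![![1,I,0], ![1,I,1], ![1,I,2], ![1,I,3]], fun i => by fin_cases i <;> exact hmem _, ?_⟩
    intro i j hij
    fin_cases i <;> fin_cases j <;> first
      | exact absurd rfl hij
      | exact ⟨0, 2, by
          simp only [Matrix.cons_val_zero, Matrix.cons_val_one, Matrix.head_cons,
            Matrix.cons_val_two, Matrix.tail_cons, Matrix.cons_val', Matrix.cons_val_fin_one,
            Matrix.empty_val', Matrix.cons_val_three]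
          norm_num⟩

/-- Let `(o ∈ X)` be a Du Val singularity germ defined by
`x² + F₃(y,z) + R(y,z) = 0`, with `F₃` a homogeneous cubic in `(y,z)` and
`R ≡ 0 mod (y,z)⁴`.  If `F₃ = l₁²·l₂` with `l₁`, `l₂` non-proportional linear forms
(exactly two coprime factors) then `(o ∈ X)` is of type `D_r` for some `r ≥ 5`;
if `F₃ = l₁·l₂·l₃` with pairwise non-proportional linear forms (three pairwise coprime
factors) then `(o ∈ X)` is of type `D₄`. -/
theorem stmt_13 (b30 b21 b12 b03 : ℂ)
    (A : Fin 5 → ℂ × ℂ → ℂ) (hA : ∀ i, AnalyticAt ℂ (A i) 0)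
    (F : (Fin 3 → ℂ) → ℂ)
    (hF : ∀ q : Fin 3 → ℂ,
      F q = q 0 ^ 2
        + (b30 * q 1 ^ 3 + b21 * q 1 ^ 2 * q 2 + b12 * q 1 * q 2 ^ 2 + b03 * q 2 ^ 3)
        + (q 1 ^ 4 * A 0 (q 1, q 2) + q 1 ^ 3 * q 2 * A 1 (q 1, q 2)
            + q 1 ^ 2 * q 2 ^ 2 * A 2 (q 1, q 2) + q 1 * q 2 ^ 3 * A 3 (q 1, q 2)
            + q 2 ^ 4 * A 4 (q 1, q 2)))
    (hDuVal : IsDuVal F) :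
    ((∃ α₁ β₁ α₂ β₂ : ℂ,
        ((α₁, β₁) : ℂ × ℂ) ≠ 0 ∧ ((α₂, β₂) : ℂ × ℂ) ≠ 0 ∧ α₁ * β₂ - α₂ * β₁ ≠ 0 ∧
        ∀ y z : ℂ,
          b30 * y ^ 3 + b21 * y ^ 2 * z + b12 * y * z ^ 2 + b03 * z ^ 3
            = (α₁ * y + β₁ * z) ^ 2 * (α₂ * y + β₂ * z)) →
      ∃ r : ℕ, 5 ≤ r ∧ GermEquiv F (duValD r)) ∧
    ((∃ α₁ β₁ α₂ β₂ α₃ β₃ : ℂ,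
        α₁ * β₂ - α₂ * β₁ ≠ 0 ∧ α₁ * β₃ - α₃ * β₁ ≠ 0 ∧ α₂ * β₃ - α₃ * β₂ ≠ 0 ∧
        ∀ y z : ℂ,
          b30 * y ^ 3 + b21 * y ^ 2 * z + b12 * y * z ^ 2 + b03 * z ^ 3
            = (α₁ * y + β₁ * z) * (α₂ * y + β₂ * z) * (α₃ * y + β₃ * z)) →
      GermEquiv F (duValD 4)) := by

  have hFupper : ∀ w ∈ Vset F, w 0 = 0 ∧
      b30 * w 1 ^ 3 + b21 * w 1 ^ 2 * w 2 + b12 * w 1 * w 2 ^ 2 + b03 * w 2 ^ 3 = 0 := by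
    intro w hw
    have hH : ∀ g1 g2 : ℂ → ℂ, AnalyticAt ℂ g1 0 → AnalyticAt ℂ g2 0 →
        ∃ ρ : ℂ → ℂ, AnalyticAt ℂ ρ 0 ∧ ∀ x t : ℂ,
          F (fun i => ![x, t * g1 t, t * g2 t] i)
            = x ^ 2 + t ^ 3 * (b30 * g1 t ^ 3 + b21 * g1 t ^ 2 * g2 t
                + b12 * g1 t * g2 t ^ 2 + b03 * g2 t ^ 3) + t ^ 4 * ρ t := by
      intro g1 g2 h1 h2
      have hinner : AnalyticAt ℂ (fun t : ℂ => (t * g1 t, t * g2 t)) 0 :=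
        ((analyticAt_id (𝕜 := ℂ) (E := ℂ)).mul h1).prod
          ((analyticAt_id (𝕜 := ℂ) (E := ℂ)).mul h2)
      have hcomp : ∀ i : Fin 5, AnalyticAt ℂ (fun t : ℂ => A i (t * g1 t, t * g2 t)) 0 := by
        intro i
        refine AnalyticAt.comp ?_ hinner
        simpa [Prod.zero_eq_mk] using hA i
      refine ⟨fun t => g1 t^4 * A 0 (t*g1 t, t*g2 t) + g1 t^3 * g2 t * A 1 (t*g1 t, t*g2 t)
        + g1 t^2 * g2 t^2 * A 2 (t*g1 t, t*g2 t) + g1 t * g2 t^3 * A 3 (t*g1 t, t*g2 t)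
        + g2 t^4 * A 4 (t*g1 t, t*g2 t), ?_, ?_⟩
      · exact (((((h1.pow 4).mul (hcomp 0)).add (((h1.pow 3).mul h2).mul (hcomp 1))).add
          ((((h1.pow 2).mul (h2.pow 2)).mul (hcomp 2)))).add
          ((h1.mul (h2.pow 3)).mul (hcomp 3))).add ((h2.pow 4).mul (hcomp 4))
      · intro x t
        rw [hF]
        simp only [Matrix.cons_val_zero, Matrix.cons_val_one, Matrix.head_cons,
          Matrix.cons_val_two, Matrix.tail_cons]
        ring
    exact Vupper b30 b21 b12 b03 hH hw
  have hFmem : ∀ β α : ℂ,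
      b30 * β ^ 3 + b21 * β ^ 2 * (-α) + b12 * β * (-α) ^ 2 + b03 * (-α) ^ 3 = 0 →
      (![0, β, -α] : Fin 3 → ℂ) ∈ Vset F := by
    intro β α hvan
    have hinner : AnalyticAt ℂ (fun t : ℂ => (t * β, t * (-α))) 0 :=
      ((analyticAt_id (𝕜 := ℂ) (E := ℂ)).mul analyticAt_const).prod
        ((analyticAt_id (𝕜 := ℂ) (E := ℂ)).mul analyticAt_const)
    have hcomp : ∀ i : Fin 5, AnalyticAt ℂ (fun t : ℂ => A i (t * β, t * (-α))) 0 := by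
      intro i
      refine AnalyticAt.comp ?_ hinner
      simpa [Prod.zero_eq_mk] using hA i
    refine mem_line 0 β (-α) (g := fun t => β^4 * A 0 (t*β, t*(-α)) + β^3*(-α) * A 1 (t*β, t*(-α))
      + β^2*(-α)^2 * A 2 (t*β, t*(-α)) + β*(-α)^3 * A 3 (t*β, t*(-α))
      + (-α)^4 * A 4 (t*β, t*(-α))) ?_ ?_
    · exact ((((analyticAt_const.mul (hcomp 0)).add (analyticAt_const.mul (hcomp 1))).add
        (analyticAt_const.mul (hcomp 2))).add (analyticAt_const.mul (hcomp 3))).add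
        (analyticAt_const.mul (hcomp 4))
    · intro t
      rw [hF]
      simp only [Matrix.cons_val_zero, Matrix.cons_val_one, Matrix.head_cons,
        Matrix.cons_val_two, Matrix.tail_cons]
      linear_combination t^3 * hvan
  constructor
  · -- two coprime factors
    rintro ⟨α₁, β₁, α₂, β₂, h1, h2, hd, hfac⟩
    have hd1 : (![0, β₁, -α₁] : Fin 3 → ℂ) ∈ Vset F :=
      hFmem β₁ α₁ (by rw [hfac β₁ (-α₁)]; ring)
    have hd2 : (![0, β₂, -α₂] : Fin 3 → ℂ) ∈ Vset F :=
      hFmem β₂ α₂ (by rw [hfac β₂ (-α₂)]; ring)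
    have hFl : ∀ w ∈ Vset F, w 0 = 0 ∧ ∃ k : Fin 2,
        ((![(α₁,β₁),(α₂,β₂)] : Fin 2 → ℂ × ℂ) k).1 * w 1
          + ((![(α₁,β₁),(α₂,β₂)] : Fin 2 → ℂ × ℂ) k).2 * w 2 = 0 := by
      intro w hw
      obtain ⟨h0, hc⟩ := hFupper w hw
      refine ⟨h0, ?_⟩
      have hz : (α₁*w 1 + β₁*w 2)^2 * (α₂*w 1 + β₂*w 2) = 0 := by
        rw [← hfac (w 1) (w 2)]; exact hc
      rcases mul_eq_zero.mp hz with h | h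
      · exact ⟨0, by simpa using pow_eq_zero_iff two_ne_zero |>.mp h⟩
      · exact ⟨1, by simpa using h⟩
    have hlines : ∀ k : Fin 2, ¬(((![(α₁,β₁),(α₂,β₂)] : Fin 2 → ℂ × ℂ) k).1 = 0
        ∧ ((![(α₁,β₁),(α₂,β₂)] : Fin 2 → ℂ × ℂ) k).2 = 0) := by
      intro k
      fin_cases k
      · rintro ⟨ha, hb⟩; exact h1 (by simp_all [Prod.ext_iff])
      · rintro ⟨ha, hb⟩; exact h2 (by simp_all [Prod.ext_iff])
    rcases hDuVal with ⟨r, hr, hG⟩ | ⟨r, hr, hG⟩ | hG | hG | hG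
    · exfalso
      obtain ⟨T, S, hST, hTS, hTm, hSm⟩ := transport hG
      obtain ⟨v, hvmem, hvdet⟩ := memA hr
      exact main_pigeon (by norm_num) S T hTS v hvdet _ hlines
        (fun i => (hFl _ (hSm _ (hvmem i))).1) (fun i => (hFl _ (hSm _ (hvmem i))).2)
    · rcases (by omega : r = 4 ∨ 5 ≤ r) with rfl | hr5
      · exfalso
        obtain ⟨T, S, hST, hTS, hTm, hSm⟩ := transport hG
        obtain ⟨v, hvmem, hvdet⟩ := memD4
        exact main_pigeon (by norm_num) S T hTS v hvdet _ hlines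
          (fun i => (hFl _ (hSm _ (hvmem i))).1) (fun i => (hFl _ (hSm _ (hvmem i))).2)
      · exact ⟨r, hr5, hG⟩
    · exfalso
      obtain ⟨T, S, hST, hTS, hTm, hSm⟩ := transport hG
      have hmem : ∀ i : Fin 2, T ((![![0,β₁,-α₁], ![0,β₂,-α₂]] : Fin 2 → Fin 3 → ℂ) i)
          ∈ Vset duValE6 := by
        intro i; fin_cases i; exacts [hTm _ hd1, hTm _ hd2]
      refine main_pigeon (by norm_num : 1 < 2) T S hST ![![0,β₁,-α₁], ![0,β₂,-α₂]] ?_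
        ![((1:ℂ),(0:ℂ))] (by intro k; fin_cases k; simp) ?_ ?_
      · intro i j hij
        fin_cases i <;> fin_cases j <;>
          first
          | exact absurd rfl hij
          | exact ⟨1, 2, by
              simp
              intro h
              first
              | exact hd (by linear_combination h)
              | exact hd (by linear_combination -h)⟩
      · intro i; exact (upperE6 (hmem i)).1
      · intro i
        refine ⟨0, ?_⟩
        have := (upperE6 (hmem i)).2
        simpa using this
    · exfalso
      obtain ⟨T, S, hST, hTS, hTm, hSm⟩ := transport hG
      have hmem : ∀ i : Fin 2, T ((![![0,β₁,-α₁], ![0,β₂,-α₂]] : Fin 2 → Fin 3 → ℂ) i)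
          ∈ Vset duValE7 := by
        intro i; fin_cases i; exacts [hTm _ hd1, hTm _ hd2]
      refine main_pigeon (by norm_num : 1 < 2) T S hST ![![0,β₁,-α₁], ![0,β₂,-α₂]] ?_
        ![((1:ℂ),(0:ℂ))] (by intro k; fin_cases k; simp) ?_ ?_
      · intro i j hij
        fin_cases i <;> fin_cases j <;>
          first
          | exact absurd rfl hij
          | exact ⟨1, 2, by
              simp
              intro h
              first
              | exact hd (by linear_combination h)
              | exact hd (by linear_combination -h)⟩
      · intro i; exact (upperE7 (hmem i)).1
      · intro i
        refine ⟨0, ?_⟩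
        have := (upperE7 (hmem i)).2
        simpa using this
    · exfalso
      obtain ⟨T, S, hST, hTS, hTm, hSm⟩ := transport hG
      have hmem : ∀ i : Fin 2, T ((![![0,β₁,-α₁], ![0,β₂,-α₂]] : Fin 2 → Fin 3 → ℂ) i)
          ∈ Vset duValE8 := by
        intro i; fin_cases i; exacts [hTm _ hd1, hTm _ hd2]
      refine main_pigeon (by norm_num : 1 < 2) T S hST ![![0,β₁,-α₁], ![0,β₂,-α₂]] ?_
        ![((1:ℂ),(0:ℂ))] (by intro k; fin_cases k; simp) ?_ ?_
      · intro i j hij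
        fin_cases i <;> fin_cases j <;>
          first
          | exact absurd rfl hij
          | exact ⟨1, 2, by
              simp
              intro h
              first
              | exact hd (by linear_combination h)
              | exact hd (by linear_combination -h)⟩
      · intro i; exact (upperE8 (hmem i)).1
      · intro i
        refine ⟨0, ?_⟩
        have := (upperE8 (hmem i)).2
        simpa using this
  · -- three coprime factors
    rintro ⟨α₁, β₁, α₂, β₂, α₃, β₃, hd12, hd13, hd23, hfac⟩
    have hd1 : (![0, β₁, -α₁] : Fin 3 → ℂ) ∈ Vset F :=
      hFmem β₁ α₁ (by rw [hfac β₁ (-α₁)]; ring)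
    have hd2 : (![0, β₂, -α₂] : Fin 3 → ℂ) ∈ Vset F :=
      hFmem β₂ α₂ (by rw [hfac β₂ (-α₂)]; ring)
    have hd3 : (![0, β₃, -α₃] : Fin 3 → ℂ) ∈ Vset F :=
      hFmem β₃ α₃ (by rw [hfac β₃ (-α₃)]; ring)
    have hFl : ∀ w ∈ Vset F, w 0 = 0 ∧ ∃ k : Fin 3,
        ((![(α₁,β₁),(α₂,β₂),(α₃,β₃)] : Fin 3 → ℂ × ℂ) k).1 * w 1
          + ((![(α₁,β₁),(α₂,β₂),(α₃,β₃)] : Fin 3 → ℂ × ℂ) k).2 * w 2 = 0 := by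
      intro w hw
      obtain ⟨h0, hc⟩ := hFupper w hw
      refine ⟨h0, ?_⟩
      have hz : (α₁*w 1 + β₁*w 2) * (α₂*w 1 + β₂*w 2) * (α₃*w 1 + β₃*w 2) = 0 := by
        rw [← hfac (w 1) (w 2)]; exact hc
      rcases mul_eq_zero.mp hz with h | h
      · rcases mul_eq_zero.mp h with h' | h'
        · exact ⟨0, by simpa using h'⟩
        · exact ⟨1, by simpa using h'⟩
      · exact ⟨2, by simpa using h⟩
    have hn1 : ¬(α₁ = 0 ∧ β₁ = 0) := by
      rintro ⟨ha, hb⟩; exact hd12 (by rw [ha, hb]; ring)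
    have hn2 : ¬(α₂ = 0 ∧ β₂ = 0) := by
      rintro ⟨ha, hb⟩; exact hd12 (by rw [ha, hb]; ring)
    have hn3 : ¬(α₃ = 0 ∧ β₃ = 0) := by
      rintro ⟨ha, hb⟩; exact hd13 (by rw [ha, hb]; ring)
    have hlines : ∀ k : Fin 3, ¬(((![(α₁,β₁),(α₂,β₂),(α₃,β₃)] : Fin 3 → ℂ × ℂ) k).1 = 0
        ∧ ((![(α₁,β₁),(α₂,β₂),(α₃,β₃)] : Fin 3 → ℂ × ℂ) k).2 = 0) := by
      intro k
      fin_cases k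
      · rintro ⟨ha, hb⟩; exact hn1 ⟨by simpa using ha, by simpa using hb⟩
      · rintro ⟨ha, hb⟩; exact hn2 ⟨by simpa using ha, by simpa using hb⟩
      · rintro ⟨ha, hb⟩; exact hn3 ⟨by simpa using ha, by simpa using hb⟩
    have hddet : ∀ i j : Fin 3, i ≠ j → ∃ a b : Fin 3,
        (![![0,β₁,-α₁], ![0,β₂,-α₂], ![0,β₃,-α₃]] : Fin 3 → Fin 3 → ℂ) i a
          * (![![0,β₁,-α₁], ![0,β₂,-α₂], ![0,β₃,-α₃]] : Fin 3 → Fin 3 → ℂ) j b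
        - (![![0,β₁,-α₁], ![0,β₂,-α₂], ![0,β₃,-α₃]] : Fin 3 → Fin 3 → ℂ) j a
          * (![![0,β₁,-α₁], ![0,β₂,-α₂], ![0,β₃,-α₃]] : Fin 3 → Fin 3 → ℂ) i b ≠ 0 := by
      intro i j hij
      fin_cases i <;> fin_cases j <;>
        first
        | exact absurd rfl hij
        | exact ⟨1, 2, by
            simp
            intro h
            first
            | exact hd12 (by linear_combination h)
            | exact hd12 (by linear_combination -h)
            | exact hd13 (by linear_combination h)
            | exact hd13 (by linear_combination -h)
            | exact hd23 (by linear_combination h)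
            | exact hd23 (by linear_combination -h)⟩
    rcases hDuVal with ⟨r, hr, hG⟩ | ⟨r, hr, hG⟩ | hG | hG | hG
    · exfalso
      obtain ⟨T, S, hST, hTS, hTm, hSm⟩ := transport hG
      obtain ⟨v, hvmem, hvdet⟩ := memA hr
      exact main_pigeon (by norm_num) S T hTS v hvdet _ hlines
        (fun i => (hFl _ (hSm _ (hvmem i))).1) (fun i => (hFl _ (hSm _ (hvmem i))).2)
    · rcases (by omega : r = 4 ∨ 5 ≤ r) with rfl | hr5
      · exact hG
      · exfalso
        obtain ⟨T, S, hST, hTS, hTm, hSm⟩ := transport hG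
        have hmem : ∀ i : Fin 3,
            T ((![![0,β₁,-α₁], ![0,β₂,-α₂], ![0,β₃,-α₃]] : Fin 3 → Fin 3 → ℂ) i)
              ∈ Vset (duValD r) := by
          intro i; fin_cases i; exacts [hTm _ hd1, hTm _ hd2, hTm _ hd3]
        refine main_pigeon (by norm_num : 2 < 3) T S hST
          ![![0,β₁,-α₁], ![0,β₂,-α₂], ![0,β₃,-α₃]] hddet
          ![((1:ℂ),(0:ℂ)), ((0:ℂ),(1:ℂ))] ?_ ?_ ?_
        · intro k; fin_cases k <;> simp
        · intro i; exact (upperD hr5 (hmem i)).1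
        · intro i
          rcases (upperD hr5 (hmem i)).2 with h | h
          · exact ⟨0, by simpa using h⟩
          · exact ⟨1, by simpa using h⟩
    · exfalso
      obtain ⟨T, S, hST, hTS, hTm, hSm⟩ := transport hG
      have hmem : ∀ i : Fin 3,
          T ((![![0,β₁,-α₁], ![0,β₂,-α₂], ![0,β₃,-α₃]] : Fin 3 → Fin 3 → ℂ) i)
            ∈ Vset duValE6 := by
        intro i; fin_cases i; exacts [hTm _ hd1, hTm _ hd2, hTm _ hd3]
      refine main_pigeon (by norm_num : 1 < 3) T S hST
        ![![0,β₁,-α₁], ![0,β₂,-α₂], ![0,β₃,-α₃]] hddet ![((1:ℂ),(0:ℂ))]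
        (by intro k; fin_cases k; simp) ?_ ?_
      · intro i; exact (upperE6 (hmem i)).1
      · intro i; exact ⟨0, by simpa using (upperE6 (hmem i)).2⟩
    · exfalso
      obtain ⟨T, S, hST, hTS, hTm, hSm⟩ := transport hG
      have hmem : ∀ i : Fin 3,
          T ((![![0,β₁,-α₁], ![0,β₂,-α₂], ![0,β₃,-α₃]] : Fin 3 → Fin 3 → ℂ) i)
            ∈ Vset duValE7 := by
        intro i; fin_cases i; exacts [hTm _ hd1, hTm _ hd2, hTm _ hd3]
      refine main_pigeon (by norm_num : 1 < 3) T S hST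
        ![![0,β₁,-α₁], ![0,β₂,-α₂], ![0,β₃,-α₃]] hddet ![((1:ℂ),(0:ℂ))]
        (by intro k; fin_cases k; simp) ?_ ?_
      · intro i; exact (upperE7 (hmem i)).1
      · intro i; exact ⟨0, by simpa using (upperE7 (hmem i)).2⟩
    · exfalso
      obtain ⟨T, S, hST, hTS, hTm, hSm⟩ := transport hG
      have hmem : ∀ i : Fin 3,
          T ((![![0,β₁,-α₁], ![0,β₂,-α₂], ![0,β₃,-α₃]] : Fin 3 → Fin 3 → ℂ) i)
            ∈ Vset duValE8 := by
        intro i; fin_cases i; exacts [hTm _ hd1, hTm _ hd2, hTm _ hd3]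
      refine main_pigeon (by norm_num : 1 < 3) T S hST
        ![![0,β₁,-α₁], ![0,β₂,-α₂], ![0,β₃,-α₃]] hddet ![((1:ℂ),(0:ℂ))]
        (by intro k; fin_cases k; simp) ?_ ?_
      · intro i; exact (upperE8 (hmem i)).1
      · intro i; exact ⟨0, by simpa using (upperE8 (hmem i)).2⟩
end
end
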